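/- arXiv:1802.09599 — 3 statements merged into one kernel-verified Lean document; each statement's English description precedes it below -/
import Mathlib

section
/- Let b be a square-free integer with b ≠ 3 and b ≠ 5. Then the cubic polynomial y^3 - 4*b*y - b^2 is irreducible over the rationals. -/
open Polynomial

/-- Integer version: no integer root. -/
lemma no_int_root_resolvent (b : ℤ) (hsf : Squarefree b) (h3 : b ≠ 3) (h5 : b ≠ 5)
    (m : ℤ) : m ^ 3 - 4 * b * m - b ^ 2 ≠ 0 := by
  intro h
  have hb0 : b ≠ 0 := hsf.ne_zero
  have hbm3 : b ∣ m ^ 3 := ⟨4 * m + b, by linarith⟩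
  have hbm : b ∣ m := (hsf.dvd_pow_iff_dvd three_ne_zero).mp hbm3
  obtain ⟨s, rfl⟩ := hbm
  have key : b * s ^ 3 - 4 * s - 1 = 0 := by
    have h2 : b ^ 2 * (b * s ^ 3 - 4 * s - 1) = 0 := by ring_nf; ring_nf at h; linarith
    rcases mul_eq_zero.mp h2 with h' | h'
    · exact absurd (pow_eq_zero_iff (two_ne_zero) |>.mp h') hb0
    · exact h'
  have hs1 : s ∣ 1 := ⟨b * s ^ 2 - 4, by linarith [key]⟩
  rcases Int.isUnit_iff.mp (isUnit_of_dvd_one hs1) with rfl | rfl <;>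
    simp at key <;> omega

/-- For a square-free integer `b` with `b ≠ 3, 5`, the resolvent cubic
`y^3 - 4*b*y - b^2` is irreducible over `ℚ`. -/
theorem irreducible_resolvent_cubic_bb (b : ℤ) (hsf : Squarefree b) (h3 : b ≠ 3) (h5 : b ≠ 5) :
    Irreducible (X ^ 3 - C (4 * (b : ℚ)) * X - C ((b : ℚ) ^ 2)) := by
  set p : ℚ[X] := X ^ 3 - C (4 * (b : ℚ)) * X - C ((b : ℚ) ^ 2) with hp
  have hdeg : p.natDegree = 3 := by
    unfold p
    compute_degree!
  rw [irreducible_iff_roots_eq_zero_of_degree_le_three (by omega) (by omega)]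
  rw [Multiset.eq_zero_iff_forall_notMem]
  intro r hr
  have hp0 : p ≠ 0 := fun h => by simp [h] at hdeg
  have hroot : r ^ 3 - 4 * (b : ℚ) * r - (b : ℚ) ^ 2 = 0 := by
    have := (mem_roots hp0).mp hr
    simpa [p, IsRoot, sub_eq_zero] using this
  have hint : IsIntegral ℤ r := by
    refine ⟨X ^ 3 - C (4 * b) * X - C (b ^ 2), ?_, ?_⟩
    · monicity!
    · simp only [aeval_def, eval₂_sub, eval₂_mul, eval₂_pow, eval₂_X, eval₂_C]
      simp only [algebraMap_int_eq, eq_intCast]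
      push_cast
      linear_combination hroot
  obtain ⟨m, rfl⟩ := IsIntegrallyClosed.isIntegral_iff.mp hint
  have : (m : ℚ) ^ 3 - 4 * (b : ℚ) * m - (b : ℚ) ^ 2 = 0 := by
    simpa using hroot
  have hz : m ^ 3 - 4 * b * m - b ^ 2 = 0 := by exact_mod_cast this
  exact no_int_root_resolvent b hsf h3 h5 m hz
end

section
/- For every integer d, the cubic polynomial y^3 - 4*d*y - d is irreducible over the rationals whenever d is square-free and d ≠ 0. -/
open Polynomial

/-- For every nonzero square-free integer `d`, the cubic `y^3 - 4*d*y - d`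
is irreducible over `ℚ`. -/
theorem irreducible_resolvent_cubic_1d :
    ∀ d : ℤ, Squarefree d → d ≠ 0 →
      Irreducible (X ^ 3 - C (4 * (d : ℚ)) * X - C (d : ℚ)) := by
  intro d _ hd
  set q : ℤ[X] := X ^ 3 - C (4 * d) * X - C d with hq
  have hmonic : q.Monic := by unfold q; monicity!
  have hmap : q.map (Int.castRingHom ℚ)
      = X ^ 3 - C (4 * (d : ℚ)) * X - C (d : ℚ) := by
    simp only [hq, Polynomial.map_sub, Polynomial.map_mul, Polynomial.map_pow,
      Polynomial.map_X, Polynomial.map_C, Int.coe_castRingHom]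
    push_cast
    rfl
  rw [← hmap]
  have hdeg : (q.map (Int.castRingHom ℚ)).natDegree = 3 := by
    rw [hmap]; compute_degree!
  rw [irreducible_iff_roots_eq_zero_of_degree_le_three (by omega) (by omega),
    Multiset.eq_zero_iff_forall_notMem]
  intro r hr
  have hne : q.map (Int.castRingHom ℚ) ≠ 0 := by
    intro h; rw [h] at hdeg; simp at hdeg
  rw [mem_roots hne, IsRoot, eval_map] at hr
  have hr' : aeval r q = 0 := hr
  obtain ⟨n, hn⟩ := isInteger_of_is_root_of_monic hmonic hr'
  rw [← hn] at hr'
  have hn' : (n : ℤ) ^ 3 - 4 * d * n - d = 0 := by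
    rw [hq] at hr'
    simp only [map_sub, map_mul, map_pow, aeval_X, aeval_C, eq_intCast, map_intCast] at hr'
    have h2 : ((n ^ 3 - 4 * d * n - d : ℤ) : ℚ) = 0 := by push_cast at hr' ⊢; linarith [hr']
    exact_mod_cast h2
  have hdvd : (4 * n + 1) ∣ n ^ 3 := ⟨d, by linarith [hn']⟩
  have hcop : IsCoprime (4 * n + 1) n := ⟨1, -4, by ring⟩
  have hu : IsUnit (4 * n + 1) :=
    (hcop.pow_right (n := 3)).isUnit_of_dvd' dvd_rfl hdvd
  rcases Int.isUnit_iff.mp hu with h | h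
  · have hn0 : n = 0 := by omega
    subst hn0
    simp at hn'
    exact hd hn'
  · omega
end

section
/- Let d be a square-free integer with d ≠ -2. Then the polynomial x^4 + x^3 + d is irreducible over the rationals. -/
/-!
By Gauss's lemma it suffices to show that the monic polynomial `X⁴ + X³ + d` is irreducible over
`ℤ`. An integer root `a` gives `a²(a² + a) = -d`, so `a` is a unit by square-freeness, forcing
`d = -2` or `d = 0`. A factorisation into monic quadratics `(X² + aX + b)(X² + cX + e)` gives
`b (2a - 1) = a² (a - 1)`, which makes `2a - 1` a unit, hence `a ∈ {0, 1}`, `b = 0` and `d = be = 0`.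
-/

open Polynomial

theorem Polynomial.Monic.eq_X_sq_add_C_mul_X_add_C {R : Type*} [Semiring R] {p : R[X]}
    (hm : p.Monic) (hnd : p.natDegree = 2) : p = X ^ 2 + C (p.coeff 1) * X + C (p.coeff 0) := by
  conv_lhs => rw [eq_quadratic_of_degree_le_two (degree_le_of_natDegree_le hnd.le)]
  rw [← hnd, hm.coeff_natDegree, C_1, one_mul]

theorem coeffs_of_quadratic_mul_quadratic_eq {R : Type*} [CommRing R] {a b c e d : R}
    (h : (X ^ 2 + C a * X + C b) * (X ^ 2 + C c * X + C e) = X ^ 4 + X ^ 3 + C d) :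
    a + c = 1 ∧ b + e + a * c = 0 ∧ a * e + b * c = 0 ∧ b * e = d := by
  have expand : (X ^ 2 + C a * X + C b) * (X ^ 2 + C c * X + C e) =
      X ^ 4 + C (a + c) * X ^ 3 + C (b + e + a * c) * X ^ 2 + C (a * e + b * c) * X + C (b * e) := by
    simp only [C_add, C_mul]
    ring
  rw [expand] at h
  have hcoeff := fun n => congrArg (coeff · n) h
  simp only [coeff_add, coeff_C_mul_X_pow, coeff_C_mul_X, coeff_X_pow, coeff_C] at hcoeff
  exact ⟨by simpa using hcoeff 3, by simpa using hcoeff 2, by simpa using hcoeff 1,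
    by simpa using hcoeff 0⟩

theorem Int.eq_zero_of_quadratic_mul_quadratic_eq {a b c e d : ℤ}
    (h : (X ^ 2 + C a * X + C b) * (X ^ 2 + C c * X + C e) = X ^ 4 + X ^ 3 + C d) : d = 0 := by
  obtain ⟨h3, h2, h1, h0⟩ := coeffs_of_quadratic_mul_quadratic_eq h
  have hb : b * (2 * a - 1) = a ^ 2 * (a - 1) := by
    linear_combination -h1 + a * h2 - (a ^ 2 - b) * h3
  -- `8 a² (a - 1) = (2a - 1)(4a² - 2a - 1) + 1`
  have hunit : (2 * a - 1) * (4 * a ^ 2 - 2 * a - 1 - 8 * b) = 1 := by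
    linear_combination -8 * hb
  have hb0 : b = 0 := by
    rcases Int.eq_one_or_neg_one_of_mul_eq_one hunit with h | h
    · obtain rfl : a = 1 := by omega
      linarith
    · obtain rfl : a = 0 := by omega
      linarith
  rw [← h0, hb0, zero_mul]

theorem Int.eq_neg_two_of_pow_four_add_pow_three_add_eq_zero {a d : ℤ} (hsf : Squarefree d)
    (h : a ^ 4 + a ^ 3 + d = 0) : d = -2 := by
  have hunit : IsUnit a := hsf a ⟨-(a ^ 2 + a), by linear_combination h⟩
  rcases Int.isUnit_iff.mp hunit with rfl | rfl
  · linarith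
  · obtain rfl : d = 0 := by linarith
    exact absurd hsf not_squarefree_zero

theorem irreducible_X_pow_four_add_X_pow_three_add_C_int {d : ℤ} (hsf : Squarefree d)
    (hd : d ≠ -2) : Irreducible (X ^ 4 + X ^ 3 + C d : ℤ[X]) := by
  have hmonic : (X ^ 4 + X ^ 3 + C d : ℤ[X]).Monic := by monicity!
  have hdeg : (X ^ 4 + X ^ 3 + C d : ℤ[X]).natDegree = 4 := by compute_degree!
  refine hmonic.irreducible_iff_natDegree'.mpr
    ⟨fun h1 => by rw [h1, natDegree_one] at hdeg; omega, ?_⟩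
  intro f g hf hg hfg hgdeg
  rw [hdeg] at hgdeg
  obtain hg1 | hg2 : g.natDegree = 1 ∨ g.natDegree = 2 := by simp at hgdeg; omega
  · have hroot : (X ^ 4 + X ^ 3 + C d : ℤ[X]).IsRoot (-g.coeff 0) := by
      rw [← dvd_iff_isRoot, map_neg, sub_neg_eq_add, ← hg.eq_X_add_C hg1]
      exact Dvd.intro_left f hfg
    exact hd (Int.eq_neg_two_of_pow_four_add_pow_three_add_eq_zero hsf (by simpa using hroot))
  · have hf2 : f.natDegree = 2 := by
      have := hf.natDegree_mul hg
      rw [hfg, hdeg, hg2] at this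
      omega
    rw [hf.eq_X_sq_add_C_mul_X_add_C hf2, hg.eq_X_sq_add_C_mul_X_add_C hg2] at hfg
    exact not_squarefree_zero (Int.eq_zero_of_quadratic_mul_quadratic_eq hfg ▸ hsf)

/-- For a square-free integer `d ≠ -2`, the polynomial `x^4 + x^3 + d` is
irreducible over `ℚ`. -/
theorem irreducible_quartic_1d (d : ℤ) (hsf : Squarefree d) (hd : d ≠ -2) :
    Irreducible (X ^ 4 + X ^ 3 + C (d : ℚ)) := by
  have hmonic : (X ^ 4 + X ^ 3 + C d : ℤ[X]).Monic := by monicity!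
  simpa using (hmonic.irreducible_iff_irreducible_map_fraction_map (K := ℚ)).mp
    (irreducible_X_pow_four_add_X_pow_three_add_C_int hsf hd)
end
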